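/- Let λ_1,…,λ_d be distinct real numbers, ℓ ∈ {1,…,d}, and (α_{s,k}), s, k ∈ {1,…,d}∖{ℓ}, a matrix with all entries positive and maximal rank d−1. For r ∈ [0,1], x = (x_k)_{k≠ℓ} with x_k ≥ 0 and Σ_{k≠ℓ} x_k = 1, define ϖ(r,x) = (1−r)λ_ℓ + r·Σ_{k≠ℓ} λ_k x_k and χ(r,x) = [Σ_{s≠ℓ} (Σ_{k≠ℓ} α_{s,k}(λ_k − ϖ(r,x))x_k / Σ_{k≠ℓ} α_{s,k}x_k)² · √(Σ_{k≠ℓ} α_{s,k}x_k)] / [Σ_{s≠ℓ} √(Σ_{k≠ℓ} α_{s,k}x_k)]. Then for every p ∈ (0,1) there exists θ_p > 0 such that χ(r,x) ≥ θ_p for all (r,x) in the domain satisfying r·x_j ≤ p for every j ≠ ℓ. -/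

import Mathlib

/-!
On `[0,1] × Δ` (with `Δ` the standard simplex) the sums `∑ₖ α s k * x k` are positive, so `χ` is
continuous there, and the constraint `r * x j ≤ p` cuts out a compact subset; it therefore suffices
that `χ > 0` on it. If `χ(r, x) = 0`, every `∑ₖ α s k * (λₖ - ϖ) * x k` vanishes, so the full rank
of `α` gives `(λₖ - ϖ) * x k = 0` for all `k`. Distinctness of the `λₖ` then forces `x = e_j` with
`λ_j = ϖ = (1 - r) λ_ℓ + r λ_j`, hence `r = 1` and `r * x j = 1 > p`.
-/

open Finset

theorem Matrix.mulVec_injective_of_rank_eq_card {K m n : Type*} [Field K] [Fintype n]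
    {A : Matrix m n K} (h : A.rank = Fintype.card n) : Function.Injective A.mulVec :=
  mulVec_injective_iff.2 <| linearIndependent_iff_card_eq_finrank_span.2 <| by
    rw [Set.finrank, ← rank_eq_finrank_span_cols, h]

section Simplex

variable {ι : Type*} [Fintype ι] {x : ι → ℝ}

lemma exists_pos_of_mem_stdSimplex (hx : x ∈ stdSimplex ℝ ι) : ∃ k, 0 < x k := by
  have : ∑ _k : ι, (0 : ℝ) < ∑ k, x k := by simp [hx.2]
  simpa using exists_lt_of_sum_lt this

lemma sum_mul_pos_of_mem_stdSimplex {a : ι → ℝ} (ha : ∀ k, 0 < a k) (hx : x ∈ stdSimplex ℝ ι) :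
    0 < ∑ k, a k * x k := by
  obtain ⟨k, hk⟩ := exists_pos_of_mem_stdSimplex hx
  exact sum_pos' (fun j _ => mul_nonneg (ha j).le (hx.1 j)) ⟨k, mem_univ k, mul_pos (ha k) hk⟩

lemma exists_eq_single_of_forall_sub_mul_eq_zero [DecidableEq ι] {μ : ι → ℝ}
    (hμ : Function.Injective μ) {c : ℝ} (hx : x ∈ stdSimplex ℝ ι)
    (h : ∀ k, (μ k - c) * x k = 0) : ∃ j, x = Pi.single j 1 ∧ μ j = c := by
  obtain ⟨j, hj⟩ := exists_pos_of_mem_stdSimplex hx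
  have hμj : μ j = c := by simpa [sub_eq_zero, hj.ne'] using h j
  have hzero : ∀ k ≠ j, x k = 0 := fun k hk => by
    simpa [sub_eq_zero, ← hμj, hμ.ne hk] using h k
  have hxj : x j = 1 := by
    rw [← hx.2, sum_eq_single j (fun k _ hk => hzero k hk) (by simp)]
  refine ⟨j, funext fun k => ?_, hμj⟩
  rcases eq_or_ne k j with rfl | hk
  · simp [hxj]
  · simp [hzero k hk, hk]

end Simplex

section Chi

variable {ι : Type*} [Fintype ι] (α : ι → ι → ℝ) (μ : ι → ℝ) (μ₀ : ℝ)

/-- The paper's `ϖ(r, x)`, with `μ₀ = λ_ℓ` and `μ k = λ_k` for `k ≠ ℓ`. -/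
def weightedMean (r : ℝ) (x : ι → ℝ) : ℝ :=
  (1 - r) * μ₀ + r * ∑ k, μ k * x k

noncomputable def chi (r : ℝ) (x : ι → ℝ) : ℝ :=
  (∑ s, ((∑ k, α s k * (μ k - weightedMean μ μ₀ r x) * x k) / ∑ k, α s k * x k) ^ 2
      * √(∑ k, α s k * x k))
    / ∑ s, √(∑ k, α s k * x k)

variable {α}

lemma continuousOn_chi (hα : ∀ s k, 0 < α s k) :
    ContinuousOn (fun z : ℝ × (ι → ℝ) => chi α μ μ₀ z.1 z.2) (Set.univ ×ˢ stdSimplex ℝ ι) := by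
  have hS : ∀ z : ℝ × (ι → ℝ), z ∈ Set.univ ×ˢ stdSimplex ℝ ι → ∀ s, 0 < ∑ k, α s k * z.2 k :=
    fun z hz s => sum_mul_pos_of_mem_stdSimplex (hα s) hz.2
  unfold chi weightedMean
  refine ContinuousOn.div (continuousOn_finsetSum _ fun s _ => ?_) (by fun_prop) fun z hz => ?_
  · exact ((ContinuousOn.div (by fun_prop) (by fun_prop) fun z hz => (hS z hz s).ne').pow 2).mul
      (by fun_prop)
  · obtain ⟨k, -⟩ := exists_pos_of_mem_stdSimplex hz.2
    exact (sum_pos (fun s _ => Real.sqrt_pos.2 (hS z hz s)) ⟨k, mem_univ k⟩).ne'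

variable {μ μ₀}

lemma chi_pos (hα : ∀ s k, 0 < α s k) (hA : Function.Injective (Matrix.of α).mulVec)
    (hμ : Function.Injective μ) (hμ₀ : ∀ k, μ k ≠ μ₀) {r : ℝ} {x : ι → ℝ}
    (hx : x ∈ stdSimplex ℝ ι) (hrx : ∀ j, r * x j < 1) : 0 < chi α μ μ₀ r x := by
  classical
  set ϖ := weightedMean μ μ₀ r x with hϖ
  have hS : ∀ s, 0 < ∑ k, α s k * x k := fun s => sum_mul_pos_of_mem_stdSimplex (hα s) hx
  obtain ⟨s, hs⟩ : ∃ s, ∑ k, α s k * (μ k - ϖ) * x k ≠ 0 := by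
    by_contra! h
    have hv : (fun k => (μ k - ϖ) * x k) = 0 :=
      hA <| by ext s; simpa [Matrix.mulVec, dotProduct, mul_assoc] using h s
    obtain ⟨j, rfl, hμj⟩ := exists_eq_single_of_forall_sub_mul_eq_zero hμ hx (congrFun hv)
    have hr : r = 1 := by
      have : (1 - r) * (μ₀ - μ j) = 0 := by
        simp only [hϖ, weightedMean, Pi.single_apply, mul_ite, mul_one, mul_zero, sum_ite_eq',
          mem_univ, ↓reduceIte] at hμj
        linarith
      linarith [(mul_eq_zero.1 this).resolve_right (sub_ne_zero.2 (hμ₀ j).symm)]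
    simpa [hr] using hrx j
  refine div_pos (sum_pos' (fun s _ => by positivity) ⟨s, mem_univ s, ?_⟩)
    (sum_pos (fun s _ => Real.sqrt_pos.2 (hS s)) ⟨s, mem_univ s⟩)
  exact mul_pos (sq_pos_of_ne_zero (div_ne_zero hs (hS s).ne')) (Real.sqrt_pos.2 (hS s))

end Chi

/-- With `λ_1,…,λ_d` distinct reals, `ℓ` fixed, and `(α_{s,k})`
(`s, k ≠ ℓ`) a positive matrix of maximal rank `d − 1`, the function
`χ(r,x) = [Σ_s (Σ_k α_{s,k}(λ_k − ϖ(r,x))x_k / Σ_k α_{s,k}x_k)² √(Σ_k α_{s,k}x_k)]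
 / [Σ_s √(Σ_k α_{s,k}x_k)]`, with `ϖ(r,x) = (1−r)λ_ℓ + r Σ_{k≠ℓ} λ_k x_k`, is uniformly
bounded below by some `θ_p > 0` on the part of the domain where `r·x_j ≤ p` for all
`j ≠ ℓ`, for every `p ∈ (0,1)`. -/
theorem stmt16 {d : ℕ} (lam : Fin d → ℝ) (hdist : Function.Injective lam)
    (ℓ : Fin d)
    (α : {s : Fin d // s ≠ ℓ} → {k : Fin d // k ≠ ℓ} → ℝ)
    (hαpos : ∀ s k, 0 < α s k)
    (hrank : (Matrix.of α).rank = d - 1) :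
    ∀ p ∈ Set.Ioo (0 : ℝ) 1, ∃ θ > (0 : ℝ),
      ∀ (r : ℝ) (x : {k : Fin d // k ≠ ℓ} → ℝ),
        r ∈ Set.Icc (0 : ℝ) 1 → (∀ k, 0 ≤ x k) → ∑ k, x k = 1 →
        (∀ j : {k : Fin d // k ≠ ℓ}, r * x j ≤ p) →
        θ ≤ (∑ s : {s : Fin d // s ≠ ℓ},
              ((∑ k, α s k * (lam k.1 - ((1 - r) * lam ℓ + r * ∑ k', lam k'.1 * x k')) * x k)
                  / (∑ k, α s k * x k)) ^ 2
                * Real.sqrt (∑ k, α s k * x k))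
            / (∑ s : {s : Fin d // s ≠ ℓ}, Real.sqrt (∑ k, α s k * x k)) := by
  intro p hp
  have hA : Function.Injective (Matrix.of α).mulVec :=
    Matrix.mulVec_injective_of_rank_eq_card (by simpa using hrank)
  set K : Set (ℝ × ({k : Fin d // k ≠ ℓ} → ℝ)) :=
    (Set.Icc 0 1 ×ˢ stdSimplex ℝ _) ∩ ⋂ j, {z | z.1 * z.2 j ≤ p}
  have hK : IsCompact K := (isCompact_Icc.prod (isCompact_stdSimplex ℝ _)).inter_right <|
    isClosed_iInter fun j => isClosed_le (by fun_prop) continuous_const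
  obtain ⟨θ, hθ, hθK⟩ := hK.exists_forall_le' (a := 0)
    ((continuousOn_chi _ _ hαpos).mono fun z hz => ⟨trivial, hz.1.2⟩)
    fun z hz => chi_pos hαpos hA (hdist.comp Subtype.val_injective) (fun k h => k.2 (hdist h))
      hz.1.2 fun j => (Set.mem_iInter.1 hz.2 j).trans_lt hp.2
  exact ⟨θ, hθ, fun r x hr hx0 hx1 hrx => hθK (r, x) ⟨⟨hr, hx0, hx1⟩, Set.mem_iInter.2 hrx⟩⟩
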